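/- arXiv:1907.12710 — 2 statements merged into one kernel-verified Lean document; each statement's English description precedes it below -/
import Mathlib

section
/- The quotient ring K[x1,x2,x3]/(x1^2 - x2*x3, x1*x2 - x3^2, x1*x3 - x2^2) is a Cohen–Macaulay ring of Krull dimension 1. -/
open MvPolynomial

/-- The depth of `R` with respect to the ideal `J`: the supremum of lengths of
regular sequences on `R` consisting of elements of `J`. -/
noncomputable def idealDepth {R : Type*} [CommRing R] (J : Ideal R) : ℕ∞ :=
  sSup {c : ℕ∞ | ∃ rs : List R,
    (∀ r ∈ rs, r ∈ J) ∧ RingTheory.Sequence.IsRegular R rs ∧ c = rs.length}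

/-- The irrelevant (graded) maximal ideal of a quotient of a polynomial ring:
the image of the ideal generated by the variables. -/
noncomputable def quotMaxIdeal {K : Type*} [Field K] {σ : Type*} (I : Ideal (MvPolynomial σ K)) :
    Ideal (MvPolynomial σ K ⧸ I) :=
  (Ideal.span (Set.range X)).map (Ideal.Quotient.mk I)

/-- The ideal `(x1^2 - x2 x3, x1 x2 - x3^2, x1 x3 - x2^2)` of `K[x1,x2,x3]`,
with `x1 = X 0`, `x2 = X 1`, `x3 = X 2`. -/
noncomputable def smallIdeal (K : Type*) [Field K] : Ideal (MvPolynomial (Fin 3) K) :=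
  Ideal.span {X 0^2 - X 1 * X 2, X 0 * X 1 - X 2^2, X 0 * X 2 - X 1^2}

/-!
Let `t` be the class of `x1`. The relations rewrite every product of two of `x2, x3` as a
`K[t]`-combination of `1, x2, x3`, so the quotient `R` is a finite `K[t]`-module; the map
`xᵢ ↦ t·[i]` into the group algebra `K[t][ℤ/3]` is injective, so `K[t] → R` is injective and `t` is
a nonzerodivisor. Going up and incomparability for the integral extension `K[t] ⊆ R` give
`dim R = dim K[t] = 1`. The sequence `[t]` is regular, so the depth is at least one. Conversely,
a nonzerodivisor `a` of `R` is integral over `K[t]`, so `aR` contains a nonzero element of `K[t]`;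
hence every prime over `aR` is maximal and `R/aR` is Artinian, and an Artinian module admits no
regular element, so no regular sequence has length two.
-/

open scoped Pointwise algebraMap

section IntegralExtension

variable {A B : Type*} [CommRing A] [CommRing B] [Algebra A B] [Algebra.IsIntegral A B]

theorem ringKrullDim_le_of_isIntegral : ringKrullDim B ≤ ringKrullDim A :=
  Order.krullDim_le_of_strictMono (PrimeSpectrum.comap (algebraMap A B))
    fun _ _ h ↦ Ideal.IsIntegral.comap_lt_comap (R := A) h

theorem ringKrullDim_le_of_isIntegral_of_injective (h : Function.Injective (algebraMap A B)) :
    ringKrullDim A ≤ ringKrullDim B := by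
  have : FaithfulSMul A B := (faithfulSMul_iff_algebraMap_injective A B).mpr h
  refine iSup_le fun l ↦ ?_
  obtain ⟨⟨P, _, _⟩⟩ := Ideal.nonempty_primesOver (S := B) l.head.asIdeal
  obtain ⟨L, hL, -⟩ := Ideal.exists_ltSeries_of_hasGoingUp l P
  rw [← hL]
  exact Order.LTSeries.length_le_krullDim L

theorem Ideal.comap_span_singleton_ne_bot_of_isSMulRegular [Nontrivial A] {b : B}
    (hb : IsSMulRegular B b) : (Ideal.span {b}).comap (algebraMap A B) ≠ ⊥ := by
  obtain ⟨p, hp, hpb⟩ := Algebra.IsIntegral.isIntegral (R := A) b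
  obtain ⟨i, hi, hmem⟩ := Ideal.exists_coeff_ne_zero_mem_comap_of_non_zero_divisor_root_mem
    (fun {x} hx ↦ hb (by simpa [mul_comm] using hx)) (Ideal.mem_span_singleton_self b) hp.ne_zero hpb
  exact fun h ↦ hi (by simpa [h] using hmem)

theorem Ideal.krullDimLE_zero_quotient_of_comap_ne_bot [IsDomain A] [IsPrincipalIdealRing A]
    {J : Ideal B} (hJ : J.comap (algebraMap A B) ≠ ⊥) : Ring.KrullDimLE 0 (B ⧸ J) := by
  refine Ring.krullDimLE_zero_iff.mpr fun P hP ↦ ?_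
  refine Ideal.isMaximal_of_isIntegral_of_isMaximal_comap (R := A) P
    (Ideal.IsPrime.isMaximal inferInstance fun h ↦ hJ (eq_bot_iff.mpr fun a ha ↦ ?_))
  rw [← h, Ideal.mem_comap, IsScalarTower.algebraMap_apply A B (B ⧸ J),
    Ideal.Quotient.algebraMap_eq, Ideal.Quotient.eq_zero_iff_mem.mpr (Ideal.mem_comap.mp ha)]
  exact P.zero_mem

theorem isArtinianRing_quotient_span_singleton_of_isSMulRegular [IsDomain A]
    [IsPrincipalIdealRing A] [IsNoetherianRing B] {b : B} (hb : IsSMulRegular B b) :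
    IsArtinianRing (B ⧸ Ideal.span {b}) :=
  have := Ideal.krullDimLE_zero_quotient_of_comap_ne_bot
    (Ideal.comap_span_singleton_ne_bot_of_isSMulRegular (A := A) hb)
  IsNoetherianRing.isArtinianRing_of_krullDimLE_zero

end IntegralExtension

theorem RingTheory.Sequence.IsRegular.singleton {R : Type*} [CommRing R] {a : R}
    (ha : IsSMulRegular R a) (hspan : Ideal.span {a} ≠ ⊤) : IsRegular R [a] :=
  ⟨(isWeaklyRegular_singleton_iff R a).mpr ha, by
    rwa [Ideal.ofList_singleton, smul_eq_mul, Ideal.mul_top, ne_comm]⟩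

theorem RingTheory.Sequence.IsRegular.length_le_one {R : Type*} [CommRing R]
    (h : ∀ a : R, IsSMulRegular R a → IsArtinianRing (R ⧸ Ideal.span {a}))
    {rs : List R} (hrs : IsRegular R rs) : rs.length ≤ 1 := by
  match rs, hrs with
  | [], _ | [_], _ => simp
  | a :: b :: t, hrs =>
    obtain ⟨ha, hbt⟩ := (isRegular_cons_iff R a (b :: t)).mp hrs
    have := h a ha
    have : IsArtinian R (R ⧸ Ideal.span {a}) :=
      isArtinian_of_surjective_algebraMap (Ideal.Quotient.mk_surjective (I := Ideal.span {a}))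
    have hspan : Ideal.span {a} = a • (⊤ : Submodule R R) := by
      rw [← Submodule.ideal_span_singleton_smul, smul_eq_mul, Ideal.mul_top]
    have : IsArtinian R (QuotSMulTop a R) :=
      isArtinian_of_linearEquiv (Submodule.quotEquivOfEq _ _ hspan)
    exact absurd (eq_nil_of_isRegular_on_artinian hbt) (List.cons_ne_nil b t)

section QuotMaxIdeal

variable {K σ : Type*} [Field K] {I : Ideal (MvPolynomial σ K)}

theorem mk_X_mem_quotMaxIdeal (i : σ) : Ideal.Quotient.mk I (X i) ∈ quotMaxIdeal I :=
  Ideal.mem_map_of_mem _ (Ideal.subset_span ⟨i, rfl⟩)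

theorem quotMaxIdeal_ne_top (hI : I ≤ RingHom.ker (constantCoeff (R := K) (σ := σ))) :
    quotMaxIdeal I ≠ ⊤ :=
  ne_top_of_le_ne_top
    (RingHom.ker_ne_top (Ideal.Quotient.lift I constantCoeff fun _ hf ↦ RingHom.mem_ker.mp (hI hf)))
    (Ideal.map_le_iff_le_comap.mpr (Ideal.span_le.mpr (by rintro _ ⟨i, rfl⟩; simp)))

end QuotMaxIdeal

abbrev SmallRing (K : Type*) [Field K] : Type _ := MvPolynomial (Fin 3) K ⧸ smallIdeal K

namespace SmallRing

variable {K : Type*} [Field K]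

local notation "mk" => Ideal.Quotient.mk (smallIdeal K)

noncomputable instance : Algebra (Polynomial K) (SmallRing K) :=
  (Polynomial.aeval (mk (X 0))).toAlgebra

theorem algebraMap_X : ((Polynomial.X : Polynomial K) : SmallRing K) = mk (X 0) :=
  Polynomial.aeval_X _

theorem algebraMap_C (a : K) : ((Polynomial.C a : Polynomial K) : SmallRing K) = mk (C a) :=
  Polynomial.aeval_C _ _

theorem mk_X_zero_sq : mk (X 0) ^ 2 = mk (X 1) * mk (X 2) :=
  Ideal.Quotient.mk_eq_mk_iff_sub_mem _ _ |>.mpr (Ideal.subset_span (by simp))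

theorem mk_X_zero_mul_mk_X_one : mk (X 0) * mk (X 1) = mk (X 2) ^ 2 :=
  Ideal.Quotient.mk_eq_mk_iff_sub_mem _ _ |>.mpr (Ideal.subset_span (by simp))

theorem mk_X_zero_mul_mk_X_two : mk (X 0) * mk (X 2) = mk (X 1) ^ 2 :=
  Ideal.Quotient.mk_eq_mk_iff_sub_mem _ _ |>.mpr (Ideal.subset_span (by simp))

theorem exists_eq_algebraMap_add (y : SmallRing K) : ∃ p q r : Polynomial K,
    y = (p : SmallRing K) + q * mk (X 1) + r * mk (X 2) := by
  obtain ⟨f, rfl⟩ := Ideal.Quotient.mk_surjective y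
  induction f using MvPolynomial.induction_on with
  | C a => exact ⟨Polynomial.C a, 0, 0, by simp [algebraMap_C]⟩
  | add f g hf hg =>
    obtain ⟨p, q, r, hf⟩ := hf
    obtain ⟨p', q', r', hg⟩ := hg
    exact ⟨p + p', q + q', r + r', by rw [map_add, hf, hg]; push_cast; ring⟩
  | mul_X f i hf =>
    obtain ⟨p, q, r, hf⟩ := hf
    rw [map_mul, hf]
    fin_cases i
    · exact ⟨p * Polynomial.X, q * Polynomial.X, r * Polynomial.X, by
        push_cast; rw [algebraMap_X]; ring⟩
    · refine ⟨r * Polynomial.X ^ 2, p, q * Polynomial.X, ?_⟩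
      push_cast
      rw [algebraMap_X]
      linear_combination
        -(q : SmallRing K) * mk_X_zero_mul_mk_X_two (K := K) - r * mk_X_zero_sq (K := K)
    · refine ⟨q * Polynomial.X ^ 2, r * Polynomial.X, p, ?_⟩
      push_cast
      rw [algebraMap_X]
      linear_combination
        -(q : SmallRing K) * mk_X_zero_sq (K := K) - r * mk_X_zero_mul_mk_X_one (K := K)

/-- Over a field containing a primitive cube root of unity `ω`, `Spec` of the quotient is the union
of the three lines `t ↦ (t, ωᵏ t, ω²ᵏ t)`; the group algebra `K[t][ℤ/3]` stands in for the product
of their coordinate rings without needing `ω`. -/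
noncomputable def toGroupAlgebra : SmallRing K →ₐ[K] AddMonoidAlgebra (Polynomial K) (ZMod 3) :=
  Ideal.Quotient.liftₐ _ (aeval ![.single 0 Polynomial.X, .single 1 Polynomial.X,
    .single 2 Polynomial.X]) fun _ ha ↦ RingHom.mem_ker.mp <| (Ideal.span_le.mpr <| by
      rintro _ (rfl | rfl | rfl) <;>
        simp [sq, AddMonoidAlgebra.single_mul_single, sub_eq_zero] <;> rfl) ha

theorem toGroupAlgebra_mk (f : MvPolynomial (Fin 3) K) : toGroupAlgebra (mk f) =
    aeval ![.single 0 Polynomial.X, .single 1 Polynomial.X, .single 2 Polynomial.X] f :=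
  rfl

theorem toGroupAlgebra_mk_X_zero :
    toGroupAlgebra (mk (X 0)) = .single 0 (Polynomial.X : Polynomial K) := by
  simp [toGroupAlgebra_mk]

theorem toGroupAlgebra_mk_X_one :
    toGroupAlgebra (mk (X 1)) = .single 1 (Polynomial.X : Polynomial K) := by
  simp [toGroupAlgebra_mk]

theorem toGroupAlgebra_mk_X_two :
    toGroupAlgebra (mk (X 2)) = .single 2 (Polynomial.X : Polynomial K) := by
  simp [toGroupAlgebra_mk]

theorem toGroupAlgebra_algebraMap (p : Polynomial K) :
    toGroupAlgebra (p : SmallRing K) = .single 0 p := by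
  change toGroupAlgebra (Polynomial.aeval (mk (X 0)) p) = _
  rw [← Polynomial.aeval_algHom_apply, toGroupAlgebra_mk_X_zero,
    ← AddMonoidAlgebra.singleZeroAlgHom_apply (R := K) (A := Polynomial K) (M := ZMod 3),
    Polynomial.aeval_algHom_apply, Polynomial.aeval_X_left_apply]
  rfl

theorem toGroupAlgebra_injective : Function.Injective (toGroupAlgebra (K := K)) := by
  rw [injective_iff_map_eq_zero]
  intro y hy
  obtain ⟨p, q, r, rfl⟩ := exists_eq_algebraMap_add y
  simp only [map_add, map_mul, toGroupAlgebra_algebraMap, toGroupAlgebra_mk_X_one,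
    toGroupAlgebra_mk_X_two, AddMonoidAlgebra.single_mul_single, zero_add] at hy
  have hp := congr(($hy).coeff 0)
  have hq := congr(($hy).coeff 1)
  have hr := congr(($hy).coeff 2)
  have h20 : (2 : ZMod 3) ≠ 0 := by decide
  have h21 : (2 : ZMod 3) ≠ 1 := by decide
  simp [AddMonoidAlgebra.coeff_add, AddMonoidAlgebra.coeff_single, h20, h21, h20.symm, h21.symm]
    at hp hq hr
  simp [hp, hq, hr]

theorem algebraMap_injective : Function.Injective (algebraMap (Polynomial K) (SmallRing K)) :=
  fun p q h ↦ by simpa [toGroupAlgebra_algebraMap] using congr(toGroupAlgebra $h)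

theorem isSMulRegular_mk_X_zero : IsSMulRegular (SmallRing K) (mk (X 0)) := by
  intro y z h
  apply toGroupAlgebra_injective
  have h' := congr(toGroupAlgebra $h)
  simp only [smul_eq_mul, map_mul, toGroupAlgebra_mk_X_zero] at h'
  ext g : 2
  simpa [AddMonoidAlgebra.coeff_single_zero_mul, Polynomial.X_ne_zero] using congr(($h').coeff g)

theorem span_eq_top : Submodule.span (Polynomial K) {1, mk (X 1), mk (X 2)} = ⊤ := by
  refine Submodule.eq_top_iff'.mpr fun y ↦ ?_
  obtain ⟨p, q, r, rfl⟩ := exists_eq_algebraMap_add y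
  rw [← mul_one (p : SmallRing K), ← Algebra.smul_def, ← Algebra.smul_def, ← Algebra.smul_def]
  exact add_mem (add_mem (Submodule.smul_mem _ _ (Submodule.subset_span (by simp)))
    (Submodule.smul_mem _ _ (Submodule.subset_span (by simp))))
    (Submodule.smul_mem _ _ (Submodule.subset_span (by simp)))

instance : Module.Finite (Polynomial K) (SmallRing K) :=
  ⟨Submodule.fg_def.mpr ⟨_, Set.toFinite _, span_eq_top⟩⟩

theorem smallIdeal_le_ker_constantCoeff :
    smallIdeal K ≤ RingHom.ker (constantCoeff (R := K)) := by
  rw [smallIdeal, Ideal.span_le]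
  rintro _ (rfl | rfl | rfl) <;> simp

theorem isRegular_mk_X_zero : RingTheory.Sequence.IsRegular (SmallRing K) [mk (X 0)] :=
  .singleton isSMulRegular_mk_X_zero <| ne_top_of_le_ne_top
    (quotMaxIdeal_ne_top smallIdeal_le_ker_constantCoeff)
    (Ideal.span_singleton_le_iff_mem _ |>.mpr (mk_X_mem_quotMaxIdeal 0))

theorem idealDepth_eq_one : idealDepth (quotMaxIdeal (smallIdeal K)) = 1 := by
  refine le_antisymm (sSup_le ?_)
    (le_sSup ⟨[mk (X 0)], by simp [mk_X_mem_quotMaxIdeal], isRegular_mk_X_zero, by simp⟩)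
  rintro _ ⟨rs, -, hrs, rfl⟩
  exact_mod_cast hrs.length_le_one fun a ha ↦
    isArtinianRing_quotient_span_singleton_of_isSMulRegular (A := Polynomial K) ha

theorem ringKrullDim_eq_one : ringKrullDim (SmallRing K) = 1 := by
  rw [← IsPrincipalIdealRing.ringKrullDim_eq_one (Polynomial K) (Polynomial.not_isField K)]
  exact le_antisymm ringKrullDim_le_of_isIntegral
    (ringKrullDim_le_of_isIntegral_of_injective algebraMap_injective)

end SmallRing

/-- `K[x1,x2,x3]/(x1^2 - x2 x3, x1 x2 - x3^2, x1 x3 - x2^2)` is a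
Cohen–Macaulay ring of Krull dimension 1. -/
theorem stmt0 (K : Type*) [Field K] :
    idealDepth (quotMaxIdeal (smallIdeal K)) = 1 ∧
    ringKrullDim (MvPolynomial (Fin 3) K ⧸ smallIdeal K) = 1 :=
  ⟨SmallRing.idealDepth_eq_one, SmallRing.ringKrullDim_eq_one⟩
end

section
/- In S = K[x1,...,x_{3d}] with the monomial order <_r (weight vector with r blocks (1,2,2) followed by d−r blocks (1,1,1), ties broken lexicographically with x_{3d} < ... < x_1), the initial ideal of I equals the monomial ideal generated by x_{3i-1}x_{3i}, x_{3i-1}^2, x_{3i}^2 for 1 ≤ i ≤ r together with x_{3i-2}^2, x_{3i-2}x_{3i-1}, x_{3i-2}x_{3i}, x_{3i-1}^3 for r+1 ≤ i ≤ d. -/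
open MvPolynomial

/-- Lexicographic comparison of exponent vectors, the variable of smallest index
being the most significant (i.e. `x_n < ... < x_1`). -/
def lexLt {n : ℕ} (a b : Fin n →₀ ℕ) : Prop :=
  ∃ i, a i < b i ∧ ∀ j, j < i → a j = b j

/-- The weight of an exponent vector with respect to a weight vector `w`. -/
def wt {n : ℕ} (w : Fin n → ℕ) (a : Fin n →₀ ℕ) : ℕ := ∑ i, w i * a i

/-- `m` is the monomial order which first compares weights with respect to `w` and
breaks ties by the lexicographic order with `x_n < ... < x_1`. -/
def IsWtLexOrder {n : ℕ} (m : MonomialOrder (Fin n)) (w : Fin n → ℕ) : Prop :=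
  ∀ a b, m.toSyn a < m.toSyn b ↔ (wt w a < wt w b ∨ (wt w a = wt w b ∧ lexLt a b))

/-- `a` is the exponent vector of the leading monomial of `f` with respect to `m`. -/
def IsLeadMono {K : Type*} [Field K] {n : ℕ} (m : MonomialOrder (Fin n))
    (f : MvPolynomial (Fin n) K) (a : Fin n →₀ ℕ) : Prop :=
  a ∈ f.support ∧ ∀ b ∈ f.support, b ≠ a → m.toSyn b < m.toSyn a

/-- The initial ideal of `I` with respect to the monomial order `m`: the ideal
generated by the leading monomials of the nonzero elements of `I`. -/
noncomputable def initialIdeal {K : Type*} [Field K] {n : ℕ} (m : MonomialOrder (Fin n))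
    (I : Ideal (MvPolynomial (Fin n) K)) : Ideal (MvPolynomial (Fin n) K) :=
  Ideal.span {p | ∃ f ∈ I, ∃ a, IsLeadMono m f a ∧ p = monomial a 1}

/-- `G` is a Gröbner basis of `I` with respect to `m`: it generates `I` and the
leading monomials of its elements generate the initial ideal of `I`. -/
def IsGroebnerBasis {K : Type*} [Field K] {n : ℕ} (m : MonomialOrder (Fin n))
    (I : Ideal (MvPolynomial (Fin n) K)) (G : Set (MvPolynomial (Fin n) K)) : Prop :=
  Ideal.span G = I ∧
  Ideal.span {p | ∃ g ∈ G, ∃ a, IsLeadMono m g a ∧ p = monomial a 1} = initialIdeal m I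

/-- The variable `x_{3i+k}` (0-indexed) among the `3d` variables. -/
def v (d : ℕ) (i : Fin d) (k : Fin 3) : Fin (3*d) :=
  ⟨3*i.val + k.val, by have := i.isLt; have := k.isLt; omega⟩

/-- The ideal of `K[x_1, ..., x_{3d}]` generated, for `1 ≤ i ≤ d`, by
`x_{3i-2}^2 - x_{3i-1}x_{3i}`, `x_{3i-2}x_{3i-1} - x_{3i}^2`, `x_{3i-2}x_{3i} - x_{3i-1}^2`. -/
noncomputable def bigIdeal (K : Type*) [Field K] (d : ℕ) : Ideal (MvPolynomial (Fin (3*d)) K) :=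
  Ideal.span (⋃ i : Fin d,
    {X (v d i 0)^2 - X (v d i 1) * X (v d i 2),
     X (v d i 0) * X (v d i 1) - X (v d i 2)^2,
     X (v d i 0) * X (v d i 2) - X (v d i 1)^2})

/-- The weight vector `w_r = (1,2,2,...,1,2,2,1,1,...,1)` with `r` blocks `(1,2,2)`. -/
def wvec (d r : ℕ) : Fin (3*d) → ℕ :=
  fun j => if j.val < 3*r ∧ j.val % 3 ≠ 0 then 2 else 1

/-!
Write `x₁, x₂, x₃` for the variables of one block. Each listed monomial `x^β` is the leading
monomial of a binomial `x^β - x^δ` of `I` (for `x₂³ - x₃³`, a combination of two generators).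
Conversely, divide `f ∈ I` by these binomials: the remainder lies in `I` and none of its monomials
is divisible by a listed monomial. The ideal `I` lies in the kernel of the monoid-algebra map
`x^a ↦ t^φ(a)`, where `φ` records for every block `(a₁, a₂, a₃)` the degree `a₁ + a₂ + a₃` and the
class of `a₂ - a₃` modulo `3`; on monomials divisible by no listed monomial `φ` is injective, so
the remainder vanishes. Then the leading monomial of `f` occurs in some `b * q` with `b` a
binomial, hence is divisible by the leading monomial of `b`.
-/

section InitialIdeal

variable {K : Type*} [Field K] {n : ℕ} (m : MonomialOrder (Fin n))

theorem isLeadMono_degree {f : MvPolynomial (Fin n) K} (hf : f ≠ 0) :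
    IsLeadMono m f (m.degree f) :=
  ⟨(m.degree_mem_support_iff f).mpr hf, fun _ hb hne =>
    lt_of_le_of_ne (m.le_degree hb) (m.toSyn.injective.ne hne)⟩

theorem IsLeadMono.eq_degree {m : MonomialOrder (Fin n)} {f : MvPolynomial (Fin n) K}
    {a : Fin n →₀ ℕ} (h : IsLeadMono m f a) : a = m.degree f := by
  have hf : f ≠ 0 := by rintro rfl; simp [IsLeadMono] at h
  by_contra hne
  exact (m.le_degree h.1).not_gt (h.2 _ ((m.degree_mem_support_iff f).mpr hf) (Ne.symm hne))

variable {m} {I : Ideal (MvPolynomial (Fin n) K)} {L : Set (Fin n →₀ ℕ)}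

theorem exists_le_degree_of_forall_eq_zero (hL : ∀ β ∈ L, ∃ g ∈ I, g ≠ 0 ∧ m.degree g = β)
    (hI : ∀ p ∈ I, (∀ c ∈ p.support, ∀ β ∈ L, ¬ β ≤ c) → p = 0)
    {f : MvPolynomial (Fin n) K} (hfI : f ∈ I) (hf0 : f ≠ 0) : ∃ β ∈ L, β ≤ m.degree f := by
  set B : Set (MvPolynomial (Fin n) K) := {g | g ∈ I ∧ g ≠ 0 ∧ m.degree g ∈ L}
  obtain ⟨q, rem, hf, hdeg, hrem⟩ := m.div_set (B := B)
    (fun b hb => isUnit_iff_ne_zero.mpr (m.leadingCoeff_ne_zero_iff.mpr hb.2.1)) f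
  have hsum : Finsupp.linearCombination _ (fun b : B => (b : MvPolynomial (Fin n) K)) q ∈ I := by
    rw [Finsupp.linearCombination_apply]
    exact Ideal.sum_mem _ fun b _ => Ideal.mul_mem_left _ _ b.2.1
  have hrem0 : rem = 0 := by
    refine hI rem ?_ fun c hc β hβ hβc => ?_
    · exact eq_sub_of_add_eq' hf.symm ▸ I.sub_mem hfI hsum
    · obtain ⟨g, hgI, hg0, rfl⟩ := hL β hβ
      exact hrem c hc g ⟨hgI, hg0, hβ⟩ hβc
  rw [hrem0, add_zero, Finsupp.linearCombination_apply] at hf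
  have hlead : coeff (m.degree f) f ≠ 0 := m.coeff_degree_ne_zero_iff.mpr hf0
  nth_rewrite 2 [hf] at hlead
  rw [Finsupp.sum, coeff_sum] at hlead
  obtain ⟨⟨b, hbB⟩, -, hb⟩ := Finset.exists_ne_zero_of_sum_ne_zero hlead
  rw [smul_eq_mul, mul_comm, ← mem_support_iff] at hb
  have hbf : m.degree (b * q ⟨b, hbB⟩) = m.degree f :=
    m.toSyn.injective (le_antisymm (hdeg ⟨b, hbB⟩) (m.le_degree hb))
  refine ⟨m.degree b, hbB.2.2, ?_⟩
  rw [← hbf, m.degree_mul' (by rintro h; simp [h] at hb)]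
  exact le_self_add

variable (m) in
theorem initialIdeal_eq_span_of_forall_eq_zero (hL : ∀ β ∈ L, ∃ g ∈ I, g ≠ 0 ∧ m.degree g = β)
    (hI : ∀ p ∈ I, (∀ c ∈ p.support, ∀ β ∈ L, ¬ β ≤ c) → p = 0) :
    initialIdeal m I = Ideal.span ((fun β => monomial β 1) '' L) := by
  apply le_antisymm
  · rw [initialIdeal, Ideal.span_le]
    rintro _ ⟨f, hfI, a, ha, rfl⟩
    obtain rfl := ha.eq_degree
    obtain ⟨β, hβ, hβa⟩ :=
      exists_le_degree_of_forall_eq_zero hL hI hfI (by rintro rfl; simp [IsLeadMono] at ha)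
    rw [SetLike.mem_coe, show monomial (m.degree f) (1 : K) =
        monomial (m.degree f - β) 1 * monomial β 1 by
      rw [monomial_mul, one_mul, tsub_add_cancel_of_le hβa]]
    exact Ideal.mul_mem_left _ _ (Ideal.subset_span ⟨_, hβ, rfl⟩)
  · rw [Ideal.span_le]
    rintro _ ⟨β, hβ, rfl⟩
    obtain ⟨g, hgI, hg0, rfl⟩ := hL β hβ
    exact Ideal.subset_span ⟨g, hgI, _, isLeadMono_degree m hg0, rfl⟩

end InitialIdeal

section MapDomain

variable {σ R M : Type*} [CommSemiring R] [AddCommMonoid M] (φ : (σ →₀ ℕ) →+ M)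

theorem mapDomainRingHom_monomial (β : σ →₀ ℕ) (c : R) :
    AddMonoidAlgebra.mapDomainRingHom R φ (monomial β c) = AddMonoidAlgebra.single (φ β) c :=
  AddMonoidAlgebra.mapDomain_single

theorem eq_zero_of_mapDomainRingHom_eq_zero {S : Set (σ →₀ ℕ)} (hφ : Set.InjOn φ S)
    {p : MvPolynomial σ R} (hp : ↑p.support ⊆ S)
    (h : AddMonoidAlgebra.mapDomainRingHom R φ p = 0) : p = 0 :=
  AddMonoidAlgebra.coeff_injective <|
    Finsupp.mapDomain_injOn S hφ (x₁ := AddMonoidAlgebra.coeff p) (x₂ := 0) hp (by simp)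
      (by simpa using congrArg AddMonoidAlgebra.coeff h)

end MapDomain

theorem wt_add {n : ℕ} (w : Fin n → ℕ) (a b : Fin n →₀ ℕ) : wt w (a + b) = wt w a + wt w b := by
  simp [wt, mul_add, Finset.sum_add_distrib]

theorem wt_single {n : ℕ} (w : Fin n → ℕ) (j : Fin n) (e : ℕ) :
    wt w (Finsupp.single j e) = w j * e := by
  simp [wt, Finsupp.single_apply]

namespace BlockIdeal

variable {d r : ℕ}

lemma v_val (i : Fin d) (k : Fin 3) : (v d i k : ℕ) = 3 * i + k := rfl

lemma v_eq_v_iff {i i' : Fin d} {k k' : Fin 3} : v d i k = v d i' k' ↔ i = i' ∧ k = k' := by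
  refine ⟨fun h => ?_, by rintro ⟨rfl, rfl⟩; rfl⟩
  have h' := congrArg Fin.val h
  simp only [v_val] at h'
  exact ⟨Fin.ext (by omega), Fin.ext (by omega)⟩

lemma exists_eq_v (j : Fin (3 * d)) : ∃ i k, j = v d i k :=
  ⟨⟨j / 3, by omega⟩, ⟨j % 3, by omega⟩, Fin.ext (by simp [v_val]; omega)⟩

lemma wvec_v (i : Fin d) (k : Fin 3) :
    wvec d r (v d i k) = if (i : ℕ) < r ∧ k ≠ 0 then 2 else 1 := by
  have hk : (k : ℕ) < 3 := k.isLt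
  simp only [wvec, v_val, ← Fin.val_ne_iff, Fin.val_zero]
  congr 1
  apply propext
  omega

noncomputable def blockExp (d : ℕ) (i : Fin d) (t : ℕ × ℕ × ℕ) : Fin (3 * d) →₀ ℕ :=
  Finsupp.single (v d i 0) t.1 + Finsupp.single (v d i 1) t.2.1 + Finsupp.single (v d i 2) t.2.2

def block (a : Fin (3 * d) →₀ ℕ) (i : Fin d) : ℕ × ℕ × ℕ :=
  (a (v d i 0), a (v d i 1), a (v d i 2))

lemma blockExp_apply_v (i i' : Fin d) (t : ℕ × ℕ × ℕ) (k : Fin 3) :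
    blockExp d i t (v d i' k) = if i = i' then ![t.1, t.2.1, t.2.2] k else 0 := by
  by_cases h : i = i' <;> fin_cases k <;> simp [blockExp, v_eq_v_iff, h]

lemma block_blockExp (i i' : Fin d) (t : ℕ × ℕ × ℕ) :
    block (blockExp d i t) i' = if i = i' then t else 0 := by
  by_cases h : i = i' <;> simp [block, blockExp_apply_v, h]

lemma blockExp_le {i : Fin d} {t : ℕ × ℕ × ℕ} {a : Fin (3 * d) →₀ ℕ} (h : t ≤ block a i) :
    blockExp d i t ≤ a := by
  intro j
  obtain ⟨i', k, rfl⟩ := exists_eq_v j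
  by_cases hii : i = i'
  · subst hii
    obtain ⟨h1, h2, h3⟩ := h
    fin_cases k <;> simpa [blockExp_apply_v]
  · simp [blockExp_apply_v, hii]

lemma monomial_blockExp {K : Type*} [Field K] (i : Fin d) (t : ℕ × ℕ × ℕ) :
    monomial (blockExp d i t) (1 : K) =
      X (v d i 0) ^ t.1 * X (v d i 1) ^ t.2.1 * X (v d i 2) ^ t.2.2 := by
  simp only [blockExp, X_pow_eq_monomial, monomial_mul, mul_one]

lemma wt_blockExp (i : Fin d) (t : ℕ × ℕ × ℕ) :
    wt (wvec d r) (blockExp d i t) =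
      if (i : ℕ) < r then t.1 + 2 * t.2.1 + 2 * t.2.2 else t.1 + t.2.1 + t.2.2 := by
  by_cases h : (i : ℕ) < r <;> simp [blockExp, wt_add, wt_single, wvec_v, h]

lemma lexLt_blockExp {i : Fin d} {s t : ℕ × ℕ × ℕ}
    (h : s.1 < t.1 ∨ s.1 = t.1 ∧ s.2.1 < t.2.1) : lexLt (blockExp d i s) (blockExp d i t) := by
  rcases h with h | ⟨h1, h2⟩
  · refine ⟨v d i 0, by simpa [blockExp_apply_v], fun j hj => ?_⟩
    obtain ⟨i', k, rfl⟩ := exists_eq_v j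
    have hii : i ≠ i' := by rintro rfl; simp [Fin.lt_def, v_val] at hj
    simp [blockExp_apply_v, hii]
  · refine ⟨v d i 1, by simpa [blockExp_apply_v], fun j hj => ?_⟩
    obtain ⟨i', k, rfl⟩ := exists_eq_v j
    by_cases hii : i = i'
    · subst hii
      obtain rfl : k = 0 := Fin.ext (by simp [Fin.lt_def, v_val] at hj; omega)
      simp [blockExp_apply_v, h1]
    · simp [blockExp_apply_v, hii]

def heavyRelations : List ((ℕ × ℕ × ℕ) × (ℕ × ℕ × ℕ)) :=
  [((0, 1, 1), (2, 0, 0)), ((0, 2, 0), (1, 0, 1)), ((0, 0, 2), (1, 1, 0))]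

def lightRelations : List ((ℕ × ℕ × ℕ) × (ℕ × ℕ × ℕ)) :=
  [((2, 0, 0), (0, 1, 1)), ((1, 1, 0), (0, 0, 2)), ((1, 0, 1), (0, 2, 0)),
    ((0, 3, 0), (0, 0, 3))]

/-- The pairs `(β, δ)` of block exponents of the binomials `x^β - x^δ` of the Gröbner basis in
block `i`; the blocks `i < r` are those of weight `(1, 2, 2)`. -/
def relations (r : ℕ) (i : Fin d) : List ((ℕ × ℕ × ℕ) × (ℕ × ℕ × ℕ)) :=
  if (i : ℕ) < r then heavyRelations else lightRelations

noncomputable def relBinomial (K : Type*) [Field K] (i : Fin d)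
    (p : (ℕ × ℕ × ℕ) × (ℕ × ℕ × ℕ)) : MvPolynomial (Fin (3 * d)) K :=
  monomial (blockExp d i p.1) 1 - monomial (blockExp d i p.2) 1

lemma toSyn_blockExp_lt {m : MonomialOrder (Fin (3 * d))} (hm : IsWtLexOrder m (wvec d r))
    {i : Fin d} {p : (ℕ × ℕ × ℕ) × (ℕ × ℕ × ℕ)} (hp : p ∈ relations r i) :
    m.toSyn (blockExp d i p.2) < m.toSyn (blockExp d i p.1) := by
  rw [hm, wt_blockExp, wt_blockExp]
  unfold relations at hp
  split_ifs at hp ⊢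
  · left
    revert p
    decide
  · right
    have key : ∀ p ∈ lightRelations, p.2.1 + p.2.2.1 + p.2.2.2 = p.1.1 + p.1.2.1 + p.1.2.2 ∧
        (p.2.1 < p.1.1 ∨ p.2.1 = p.1.1 ∧ p.2.2.1 < p.1.2.1) := by
      decide
    exact ⟨(key p hp).1, lexLt_blockExp (key p hp).2⟩

variable {K : Type*} [Field K]

lemma degree_relBinomial {m : MonomialOrder (Fin (3 * d))} (hm : IsWtLexOrder m (wvec d r))
    {i : Fin d} {p : (ℕ × ℕ × ℕ) × (ℕ × ℕ × ℕ)} (hp : p ∈ relations r i) :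
    m.degree (relBinomial K i p) = blockExp d i p.1 := by
  classical
  have hlt := toSyn_blockExp_lt hm hp
  rw [relBinomial, m.degree_sub_of_lt] <;> simp [m.degree_monomial, hlt]

lemma relBinomial_ne_zero {m : MonomialOrder (Fin (3 * d))} (hm : IsWtLexOrder m (wvec d r))
    {i : Fin d} {p : (ℕ × ℕ × ℕ) × (ℕ × ℕ × ℕ)} (hp : p ∈ relations r i) :
    relBinomial K i p ≠ 0 := by
  intro h
  have hlt := toSyn_blockExp_lt hm hp
  rw [relBinomial, sub_eq_zero, monomial_left_inj one_ne_zero] at h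
  rw [h] at hlt
  exact lt_irrefl _ hlt

lemma relBinomial_mem {i : Fin d} {p : (ℕ × ℕ × ℕ) × (ℕ × ℕ × ℕ)} (hp : p ∈ relations r i) :
    relBinomial K i p ∈ bigIdeal K d := by
  have mem : ∀ q ∈ ({X (v d i 0)^2 - X (v d i 1) * X (v d i 2),
      X (v d i 0) * X (v d i 1) - X (v d i 2)^2, X (v d i 0) * X (v d i 2) - X (v d i 1)^2} :
      Set (MvPolynomial (Fin (3 * d)) K)), q ∈ bigIdeal K d :=
    fun q hq => Ideal.subset_span (Set.mem_iUnion.mpr ⟨i, hq⟩)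
  have h₁ := mem _ (Set.mem_insert _ _)
  have h₂ := mem _ (Set.mem_insert_of_mem _ (Set.mem_insert _ _))
  have h₃ := mem _ (Set.mem_insert_of_mem _ (Set.mem_insert_of_mem _ rfl))
  unfold relations at hp
  split_ifs at hp <;>
    simp only [heavyRelations, lightRelations, List.mem_cons, List.not_mem_nil, or_false] at hp <;>
    rcases hp with rfl | rfl | rfl | rfl <;>
    simp only [relBinomial, monomial_blockExp, pow_zero, pow_one, one_mul, mul_one]
  · convert neg_mem h₁ using 1; ring
  · convert neg_mem h₃ using 1; ring
  · convert neg_mem h₂ using 1; ring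
  · exact h₁
  · exact h₂
  · exact h₃
  · convert sub_mem (Ideal.mul_mem_left _ (X (v d i 2)) h₂) (Ideal.mul_mem_left _ (X (v d i 1)) h₃)
      using 1
    ring

def blockInvariant (t : ℕ × ℕ × ℕ) : ℕ × ZMod 3 :=
  (t.1 + t.2.1 + t.2.2, (t.2.1 : ZMod 3) - t.2.2)

def invariant (d : ℕ) : (Fin (3 * d) →₀ ℕ) →+ (Fin d → ℕ × ZMod 3) where
  toFun a i := blockInvariant (block a i)
  map_zero' := by funext i; simp [blockInvariant, block]
  map_add' a b := by
    funext i
    simp only [blockInvariant, block, Finsupp.add_apply, Pi.add_apply, Prod.mk_add_mk,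
      Nat.cast_add]
    congr 1 <;> ring

lemma invariant_blockExp (i : Fin d) (t : ℕ × ℕ × ℕ) :
    invariant d (blockExp d i t) = Pi.single i (blockInvariant t) := by
  funext i'
  by_cases h : i = i'
  · subst h; simp [invariant, block_blockExp]
  · simp [invariant, block_blockExp, h, Ne.symm h, blockInvariant]

lemma relBinomial_mem_ker (i : Fin d) (p : (ℕ × ℕ × ℕ) × (ℕ × ℕ × ℕ))
    (h : blockInvariant p.1 = blockInvariant p.2) :
    relBinomial K i p ∈ RingHom.ker (AddMonoidAlgebra.mapDomainRingHom K (invariant d)) := by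
  rw [RingHom.mem_ker, relBinomial, map_sub, mapDomainRingHom_monomial,
    mapDomainRingHom_monomial, invariant_blockExp, invariant_blockExp, h, sub_self]

variable (K) in
lemma bigIdeal_le_ker (d : ℕ) :
    bigIdeal K d ≤ RingHom.ker (AddMonoidAlgebra.mapDomainRingHom K (invariant d)) := by
  rw [bigIdeal, Ideal.span_le]
  simp only [Set.iUnion_subset_iff, Set.insert_subset_iff, Set.singleton_subset_iff]
  intro i
  refine ⟨?_, ?_, ?_⟩
  · simpa [relBinomial, monomial_blockExp] using
      relBinomial_mem_ker (K := K) i ((2, 0, 0), (0, 1, 1)) rfl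
  · simpa [relBinomial, monomial_blockExp] using
      relBinomial_mem_ker (K := K) i ((1, 1, 0), (0, 0, 2)) (by decide)
  · simpa [relBinomial, monomial_blockExp] using
      relBinomial_mem_ker (K := K) i ((1, 0, 1), (0, 2, 0)) (by decide)

lemma blockInvariant_injOn (r : ℕ) (i : Fin d) :
    Set.InjOn blockInvariant {t | ∀ p ∈ relations r i, ¬ p.1 ≤ t} := by
  rintro ⟨a, b, c⟩ hs ⟨a', b', c'⟩ ht h
  simp only [blockInvariant, Prod.mk.injEq] at h
  obtain ⟨hsum, hmod⟩ := h
  have hmod' : (b + c') % 3 = (b' + c) % 3 := by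
    rw [← ZMod.natCast_eq_natCast_iff']
    push_cast
    linear_combination hmod
  unfold relations at hs ht
  simp only [Prod.mk.injEq]
  split_ifs at hs ht
  · simp [heavyRelations, Prod.le_def] at hs ht
    omega
  · simp [lightRelations, Prod.le_def] at hs ht
    obtain ⟨ha, hab, hac, hb⟩ := hs
    obtain ⟨ha', hab', hac', hb'⟩ := ht
    interval_cases a <;> interval_cases a' <;> omega

def leadExps (d r : ℕ) : Set (Fin (3 * d) →₀ ℕ) :=
  ⋃ i, (fun p => blockExp d i p.1) '' {p | p ∈ relations r i}

lemma invariant_injOn : Set.InjOn (invariant d) {a | ∀ β ∈ leadExps d r, ¬ β ≤ a} := by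
  intro a ha b hb h
  have hblock (i : Fin d) : block a i = block b i := by
    refine blockInvariant_injOn r i (fun p hp hle => ha _ ?_ (blockExp_le hle))
      (fun p hp hle => hb _ ?_ (blockExp_le hle)) (congrFun h i) <;>
    exact Set.mem_iUnion.mpr ⟨i, p, hp, rfl⟩
  ext j
  obtain ⟨i, k, rfl⟩ := exists_eq_v j
  have := hblock i
  simp only [block, Prod.mk.injEq] at this
  fin_cases k
  exacts [this.1, this.2.1, this.2.2]

lemma eq_zero_of_mem_bigIdeal {p : MvPolynomial (Fin (3 * d)) K} (hp : p ∈ bigIdeal K d)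
    (hstd : ∀ c ∈ p.support, ∀ β ∈ leadExps d r, ¬ β ≤ c) : p = 0 :=
  eq_zero_of_mapDomainRingHom_eq_zero (invariant d) invariant_injOn hstd (bigIdeal_le_ker K d hp)

variable (K) in
lemma image_leadExps :
    (fun β => monomial β (1 : K)) '' leadExps d r =
      ⋃ i : Fin d,
        if i.val < r then
          ({X (v d i 1) * X (v d i 2), X (v d i 1)^2, X (v d i 2)^2} :
            Set (MvPolynomial (Fin (3*d)) K))
        else
          {X (v d i 0)^2, X (v d i 0) * X (v d i 1), X (v d i 0) * X (v d i 2),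
            X (v d i 1)^3} := by
  rw [leadExps, Set.image_iUnion]
  refine Set.iUnion_congr fun i => ?_
  rw [Set.image_image]
  unfold relations
  split_ifs <;> ext q <;> simp [heavyRelations, lightRelations, monomial_blockExp, eq_comm]

end BlockIdeal

open BlockIdeal in
theorem stmt18_general (K : Type*) [Field K] (d : ℕ) (r : ℕ)
    (m : MonomialOrder (Fin (3*d))) (hm : IsWtLexOrder m (wvec d r)) :
    initialIdeal m (bigIdeal K d) =
      Ideal.span (⋃ i : Fin d,
        if i.val < r then
          ({X (v d i 1) * X (v d i 2), X (v d i 1)^2, X (v d i 2)^2} :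
            Set (MvPolynomial (Fin (3*d)) K))
        else
          {X (v d i 0)^2, X (v d i 0) * X (v d i 1), X (v d i 0) * X (v d i 2),
            X (v d i 1)^3}) := by
  rw [← image_leadExps K, initialIdeal_eq_span_of_forall_eq_zero m ?_
    fun p hp => eq_zero_of_mem_bigIdeal hp]
  simp only [leadExps, Set.mem_iUnion, Set.mem_image]
  rintro _ ⟨i, p, hp, rfl⟩
  exact ⟨relBinomial K i p, relBinomial_mem hp, relBinomial_ne_zero hm hp,
    degree_relBinomial hm hp⟩

/-- with respect to `<_r`, the initial ideal of `I` is generated by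
`x_{3i-1}x_{3i}, x_{3i-1}^2, x_{3i}^2` for `1 ≤ i ≤ r` together with
`x_{3i-2}^2, x_{3i-2}x_{3i-1}, x_{3i-2}x_{3i}, x_{3i-1}^3` for `r+1 ≤ i ≤ d`. -/
theorem stmt18 (K : Type*) [Field K] (d : ℕ) (hd : 0 < d) (r : ℕ) (hr : r ≤ d)
    (m : MonomialOrder (Fin (3*d))) (hm : IsWtLexOrder m (wvec d r)) :
    initialIdeal m (bigIdeal K d) =
      Ideal.span (⋃ i : Fin d,
        if i.val < r then
          ({X (v d i 1) * X (v d i 2), X (v d i 1)^2, X (v d i 2)^2} :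
            Set (MvPolynomial (Fin (3*d)) K))
        else
          {X (v d i 0)^2, X (v d i 0) * X (v d i 1), X (v d i 0) * X (v d i 2),
            X (v d i 1)^3}) :=
  stmt18_general K d r m hm
end
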